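/- Let k ≥ 1, let G be a k-edge-connected finite simple graph on V, and fix a root r ∈ V. Let u and v be snug vertices with snug shores (S₁ᵘ, S₂ᵘ) and (S₁ᵛ, S₂ᵛ) respectively such that S₂ᵘ = S₁ᵛ. If S ⊆ V∖{r} is a k-cut such that exactly one of u, v belongs to S, then S = S₂ᵘ. (That is, an arc (u, v) of the chain graph crosses no k-cut other than S₂ᵘ = S₁ᵛ and its complement.) -/

import Mathlib

open Finset

variable {V : Type*} [Fintype V] [DecidableEq V]

/-- `Crosses S e`: exactly one endpoint of the edge/link `e` lies in `S`. -/
def Crosses (S : Finset V) (e : Sym2 V) : Prop :=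
  ∃ x y : V, e = s(x, y) ∧ x ∈ S ∧ y ∉ S

instance (S : Finset V) : DecidablePred (Crosses S) := fun e =>
  decidable_of_iff (∃ x y : V, e = s(x, y) ∧ x ∈ S ∧ y ∉ S) Iff.rfl

/-- The cut `δ(S)`: edges of `G` with exactly one endpoint in `S`. -/
def cutEdges (G : SimpleGraph V) [DecidableRel G.Adj] (S : Finset V) :
    Finset (Sym2 V) :=
  G.edgeFinset.filter fun e => Crosses S e

/-- `G` is `k`-edge-connected: every nonempty proper cut has at least `k` crossing edges. -/
def EdgeConnected (G : SimpleGraph V) [DecidableRel G.Adj] (k : ℕ) : Prop :=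
  ∀ S : Finset V, S.Nonempty → S ≠ Finset.univ → k ≤ (cutEdges G S).card

/-- `S` is a `k`-cut: a nonempty proper vertex set with exactly `k` crossing edges. -/
def IsCut (G : SimpleGraph V) [DecidableRel G.Adj] (k : ℕ) (S : Finset V) : Prop :=
  S.Nonempty ∧ S ≠ Finset.univ ∧ (cutEdges G S).card = k

/-- `(S₁, S₂)` are snug shores for `v` (with respect to the root `r`):
two `k`-cuts avoiding `r` with `v ∉ S₁` and `S₂ = S₁ ∪ {v}`. -/
def SnugShores (G : SimpleGraph V) [DecidableRel G.Adj] (k : ℕ) (r v : V)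
    (S₁ S₂ : Finset V) : Prop :=
  IsCut G k S₁ ∧ IsCut G k S₂ ∧ r ∉ S₁ ∧ r ∉ S₂ ∧ v ∉ S₁ ∧ S₂ = insert v S₁

/-- `v` is a snug vertex (with respect to the root `r`). -/
def Snug (G : SimpleGraph V) [DecidableRel G.Adj] (k : ℕ) (r v : V) : Prop :=
  v ≠ r ∧ k + 1 ≤ G.degree v ∧ ∃ S₁ S₂ : Finset V, SnugShores G k r v S₁ S₂

/-- A snug chain: snug vertices `u 0, …, u t` together with `k`-cuts
`S 0, …, S (t+1)` such that `(S i, S (i+1))` are snug shores for `u i`. -/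
def IsSnugChain (G : SimpleGraph V) [DecidableRel G.Adj] (k : ℕ) (r : V)
    (t : ℕ) (u : ℕ → V) (S : ℕ → Finset V) : Prop :=
  ∀ i ≤ t, Snug G k r (u i) ∧ SnugShores G k r (u i) (S i) (S (i + 1))

/-!
A snug vertex `w` with shores `X` and `X ∪ {w}` sends exactly half of its more than `k` edges
into `X` and half out of `X ∪ {w}`, because the two shores have the same cut size.

If two `k`-cuts `S` and `T` avoiding `r` cross, posimodularity makes `T \ S` a `k`-cut, and
comparing it with the `k`-cuts `T` and `S ∩ T` shows that `T \ S` has only `k / 2` edges leaving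
`T`. Taking `T = S₂ᵘ` (resp. `S₂ᵛ`) this excludes `u` (resp. `v`) from `T \ S`. The remaining
configurations are `S ⊊ S₂ᵘ`, where posimodularity with `S₁ᵘ` would make `{u}` a cut of size at
most `k`, and `S` disjoint from `S₂ᵘ`, where the more than `k / 2` edges from `v` into `S₂ᵘ` would
make `S ∪ S₂ᵘ` a cut of size less than `k`.
-/
section Cuts

variable (G : SimpleGraph V) [DecidableRel G.Adj]

local notation "δ" => cutEdges G

omit [Fintype V] in
lemma crosses_mk_iff {S : Finset V} {x y : V} : Crosses S s(x, y) ↔ ¬(x ∈ S ↔ y ∈ S) := by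
  constructor
  · rintro ⟨a, b, hab, ha, hb⟩
    rcases Sym2.eq_iff.mp hab with ⟨rfl, rfl⟩ | ⟨rfl, rfl⟩ <;> tauto
  · intro h
    by_cases hx : x ∈ S
    · exact ⟨x, y, rfl, hx, by tauto⟩
    · exact ⟨y, x, Sym2.eq_swap, by tauto, hx⟩

lemma cutEdges_compl (S : Finset V) : δ Sᶜ = δ S := by
  refine filter_congr fun e _ => ?_
  induction e using Sym2.ind with
  | _ x y => simp only [crosses_mk_iff, mem_compl]; tauto

lemma card_cutEdges_singleton (w : V) : #(δ {w}) = G.degree w := by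
  rw [← G.card_incidenceFinset_eq_degree]
  congr 1
  ext e
  induction e using Sym2.ind with
  | _ x y =>
    simp only [cutEdges, mem_filter, SimpleGraph.mem_incidenceFinset,
      SimpleGraph.mk'_mem_incidenceSet_iff, SimpleGraph.mem_edgeFinset,
      SimpleGraph.mem_edgeSet, crosses_mk_iff, mem_singleton]
    constructor
    · rintro ⟨hxy, h⟩; exact ⟨hxy, by tauto⟩
    · rintro ⟨hxy, rfl | rfl⟩
      · exact ⟨hxy, by simp [hxy.ne']⟩
      · exact ⟨hxy, by simp [hxy.ne]⟩

/- For disjoint `X` and `Y`, `δ X ∩ δ Y` is the set of edges between `X` and `Y`; for `Y ⊆ T`,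
`δ Y ∩ δ T` is the set of edges from `Y` to the complement of `T`. -/
lemma card_cutEdges_union_add {X Y : Finset V} (hXY : Disjoint X Y) :
    #(δ (X ∪ Y)) + 2 * #(δ X ∩ δ Y) = #(δ X) + #(δ Y) := by
  simp only [cutEdges, ← filter_and, card_filter, mul_sum, ← sum_add_distrib]
  refine sum_congr rfl fun e _ => ?_
  induction e using Sym2.ind with
  | _ x y =>
    have hx : x ∈ X → x ∉ Y := fun h => disjoint_left.mp hXY h
    have hy : y ∈ X → y ∉ Y := fun h => disjoint_left.mp hXY h
    simp only [crosses_mk_iff, mem_union]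
    by_cases x ∈ X <;> by_cases x ∈ Y <;> by_cases y ∈ X <;> by_cases y ∈ Y <;> simp_all

lemma card_cutEdges_sdiff_add_sdiff_le (S T : Finset V) :
    #(δ (S \ T)) + #(δ (T \ S)) ≤ #(δ S) + #(δ T) := by
  simp only [cutEdges, card_filter, ← sum_add_distrib]
  refine sum_le_sum fun e _ => ?_
  induction e using Sym2.ind with
  | _ x y =>
    simp only [crosses_mk_iff, mem_sdiff]
    by_cases x ∈ S <;> by_cases x ∈ T <;> by_cases y ∈ S <;> by_cases y ∈ T <;> simp_all

lemma card_cutEdges_sdiff_add {Y T : Finset V} (hYT : Y ⊆ T) :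
    #(δ (T \ Y)) + 2 * #(δ Y ∩ δ T) = #(δ Y) + #(δ T) := by
  have hcompl : Y ∪ Tᶜ = (T \ Y)ᶜ := by ext; simp only [mem_union, mem_compl, mem_sdiff]; tauto
  have := card_cutEdges_union_add G (disjoint_compl_right_iff.mpr hYT)
  rwa [hcompl, cutEdges_compl, cutEdges_compl] at this

lemma cutEdges_inter_mono {X Y T : Finset V} (hXY : X ⊆ Y) (hYT : Y ⊆ T) :
    δ X ∩ δ T ⊆ δ Y ∩ δ T := by
  intro e he
  induction e using Sym2.ind with
  | _ x y =>
    have hx : x ∈ X → x ∈ Y := fun h => hXY h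
    have hy : y ∈ X → y ∈ Y := fun h => hXY h
    have hx' : x ∈ Y → x ∈ T := fun h => hYT h
    have hy' : y ∈ Y → y ∈ T := fun h => hYT h
    simp only [cutEdges, mem_inter, mem_filter, crosses_mk_iff] at he ⊢
    tauto

lemma degree_eq_two_mul_of_card_cutEdges_insert_eq {X : Finset V} {w : V} (hw : w ∉ X)
    (h : #(δ (insert w X)) = #(δ X)) :
    G.degree w = 2 * #(δ {w} ∩ δ X) ∧ G.degree w = 2 * #(δ {w} ∩ δ (insert w X)) := by
  have hin := card_cutEdges_union_add G (disjoint_singleton_left.mpr hw)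
  have hout := card_cutEdges_sdiff_add G (singleton_subset_iff.mpr (mem_insert_self w X))
  rw [← insert_eq] at hin
  rw [sdiff_singleton_eq_erase, erase_insert hw] at hout
  rw [card_cutEdges_singleton] at hin hout
  omega

end Cuts

section EdgeConnected

variable {G : SimpleGraph V} [DecidableRel G.Adj]

local notation "δ" => cutEdges G

lemma EdgeConnected.le_card_cutEdges {k : ℕ} (hG : EdgeConnected G k) {r : V} {T : Finset V}
    (hT : T.Nonempty) (hrT : r ∉ T) : k ≤ #(δ T) :=
  hG T hT fun h => hrT (h ▸ mem_univ r)

lemma EdgeConnected.two_mul_card_cutEdges_inter_le {k : ℕ} (hG : EdgeConnected G k) {r w : V}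
    {S T : Finset V} (hS : #(δ S) ≤ k) (hT : #(δ T) ≤ k) (hrS : r ∉ S) (hrT : r ∉ T)
    (hST : (S ∩ T).Nonempty) (hSdT : (S \ T).Nonempty) (hw : w ∈ T \ S) :
    2 * #(δ {w} ∩ δ T) ≤ k := by
  have hlow_inter : k ≤ #(δ (T ∩ S)) :=
    hG.le_card_cutEdges (inter_comm S T ▸ hST) fun h => hrT (mem_inter.mp h).1
  have hlow_sdiff : k ≤ #(δ (S \ T)) :=
    hG.le_card_cutEdges hSdT fun h => hrS (mem_sdiff.mp h).1
  have hposi := card_cutEdges_sdiff_add_sdiff_le G S T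
  have hsplit := card_cutEdges_sdiff_add G (sdiff_subset : T \ S ⊆ T)
  rw [sdiff_sdiff_self_left] at hsplit
  have hmono := card_le_card
    (cutEdges_inter_mono G (singleton_subset_iff.mpr hw) (sdiff_subset : T \ S ⊆ T))
  omega

lemma EdgeConnected.two_mul_card_cutEdges_inter_le_of_disjoint {k : ℕ} (hG : EdgeConnected G k)
    {r w : V} {S T : Finset V} (hS : #(δ S) ≤ k) (hT : #(δ T) ≤ k) (hrS : r ∉ S) (hrT : r ∉ T)
    (hST : Disjoint S T) (hw : w ∈ S) :
    2 * #(δ {w} ∩ δ T) ≤ k := by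
  have hunion := card_cutEdges_union_add G hST
  have hlow := hG.le_card_cutEdges ⟨w, mem_union_left T hw⟩ fun h => (mem_union.mp h).elim hrS hrT
  have hmono := card_le_card
    (cutEdges_inter_mono G (singleton_subset_iff.mpr hw) (subset_compl_iff_disjoint_right.mpr hST))
  rw [cutEdges_compl] at hmono
  omega

lemma EdgeConnected.eq_insert_of_subset_insert {k : ℕ} (hG : EdgeConnected G k) {r w : V}
    {S X : Finset V} (hS : #(δ S) ≤ k) (hX : #(δ X) ≤ k) (hrX : r ∉ X) (hwX : w ∉ X)
    (hdeg : k < G.degree w) (hwS : w ∈ S) (hSX : S ⊆ insert w X) :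
    S = insert w X := by
  by_contra hne
  have hSdX : S \ X = {w} := by
    ext a
    simp only [mem_sdiff, mem_singleton]
    constructor
    · rintro ⟨haS, haX⟩
      exact (mem_insert.mp (hSX haS)).resolve_right haX
    · rintro rfl
      exact ⟨hwS, hwX⟩
  have hXdS : (X \ S).Nonempty := by
    rw [← insert_sdiff_of_mem _ hwS, sdiff_nonempty]
    exact fun h => hne (hSX.antisymm h)
  have hposi := card_cutEdges_sdiff_add_sdiff_le G S X
  rw [hSdX, card_cutEdges_singleton] at hposi
  have := hG.le_card_cutEdges hXdS fun h => hrX (mem_sdiff.mp h).1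
  omega

end EdgeConnected

theorem chain_arc_crosses_only_shared_shore_general
    (k : ℕ) (G : SimpleGraph V) [DecidableRel G.Adj]
    (hG : EdgeConnected G k) (r u v : V)
    (hu : Snug G k r u) (hv : Snug G k r v)
    (S₁u S₂u S₁v S₂v : Finset V)
    (hsu : SnugShores G k r u S₁u S₂u) (hsv : SnugShores G k r v S₁v S₂v)
    (heq : S₂u = S₁v)
    (S : Finset V) (hS : IsCut G k S) (hrS : r ∉ S)
    (hxor : (u ∈ S ∧ v ∉ S) ∨ (u ∉ S ∧ v ∈ S)) :
    S = S₂u := by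
  obtain ⟨-, hku, -⟩ := hu
  obtain ⟨-, hkv, -⟩ := hv
  obtain ⟨⟨-, -, hS₁u⟩, ⟨-, -, hS₂u⟩, hrS₁u, hrS₂u, huS₁u, rfl⟩ := hsu
  subst heq
  obtain ⟨-, ⟨-, -, hS₂v⟩, -, hrS₂v, hvS₂u, rfl⟩ := hsv
  obtain ⟨-, -, hS⟩ := hS
  obtain ⟨-, hu_out⟩ :=
    degree_eq_two_mul_of_card_cutEdges_insert_eq G huS₁u (hS₂u.trans hS₁u.symm)
  obtain ⟨hv_in, hv_out⟩ :=
    degree_eq_two_mul_of_card_cutEdges_insert_eq G hvS₂u (hS₂v.trans hS₂u.symm)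
  rcases hxor with ⟨huS, hvS⟩ | ⟨huS, hvS⟩
  · by_cases hSdS₂u : (S \ insert u S₁u).Nonempty
    · have := hG.two_mul_card_cutEdges_inter_le hS.le hS₂v.le hrS hrS₂v
        ⟨u, mem_inter.mpr ⟨huS, mem_insert_of_mem (mem_insert_self u S₁u)⟩⟩
        (by rwa [sdiff_insert_of_notMem hvS]) (mem_sdiff.mpr ⟨mem_insert_self _ _, hvS⟩)
      omega
    · rw [not_nonempty_iff_eq_empty, sdiff_eq_empty_iff_subset] at hSdS₂u
      exact hG.eq_insert_of_subset_insert hS.le hS₁u.le hrS₁u huS₁u hku huS hSdS₂u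
  · by_cases hSS₂u : Disjoint S (insert u S₁u)
    · have := hG.two_mul_card_cutEdges_inter_le_of_disjoint hS.le hS₂u.le hrS hrS₂u hSS₂u hvS
      omega
    · have := hG.two_mul_card_cutEdges_inter_le hS.le hS₂u.le hrS hrS₂u
        (not_disjoint_iff_nonempty_inter.mp hSS₂u) ⟨v, mem_sdiff.mpr ⟨hvS, hvS₂u⟩⟩
        (mem_sdiff.mpr ⟨mem_insert_self _ _, huS⟩)
      omega

/-- An arc `(u, v)` of the chain graph crosses no `k`-cut `S ⊆ V∖{r}` other than
`S₂ᵘ = S₁ᵛ`: if exactly one of `u`, `v` lies in such a `k`-cut `S`, then `S = S₂ᵘ`. -/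
theorem chain_arc_crosses_only_shared_shore
    (k : ℕ) (hk : 1 ≤ k) (G : SimpleGraph V) [DecidableRel G.Adj]
    (hG : EdgeConnected G k) (r u v : V)
    (hu : Snug G k r u) (hv : Snug G k r v)
    (S₁u S₂u S₁v S₂v : Finset V)
    (hsu : SnugShores G k r u S₁u S₂u) (hsv : SnugShores G k r v S₁v S₂v)
    (heq : S₂u = S₁v)
    (S : Finset V) (hS : IsCut G k S) (hrS : r ∉ S)
    (hxor : (u ∈ S ∧ v ∉ S) ∨ (u ∉ S ∧ v ∈ S)) :
    S = S₂u :=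
  chain_arc_crosses_only_shared_shore_general k G hG r u v hu hv S₁u S₂u S₁v S₂v hsu hsv heq S hS
    hrS hxor
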